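/- arXiv:1310.7687 — 2 statements merged into one kernel-verified Lean document; each statement's English description precedes it below -/
import Mathlib

section
/- For 0 < α < 2 and k ∈ ℝ, the integral ∫_0^∞ (cos(kξ) - 1) ξ^{-1-α} dξ converges and equals -|k|^{α} · (π / (2 Γ(1+α) sin(απ/2))). -/
open Real MeasureTheory Set Filter

lemma aux_integrable (α : ℝ) (hα : 0 < α) (hα2 : α < 2) (k : ℝ) :
    IntegrableOn (fun ξ : ℝ => (Real.cos (k * ξ) - 1) * ξ ^ (-1 - α)) (Ioi 0) := by
  have hmeas : ∀ S : Set ℝ, AEStronglyMeasurable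
      (fun ξ : ℝ => (Real.cos (k * ξ) - 1) * ξ ^ (-1 - α)) (volume.restrict S) := by
    intro S
    exact (((Real.measurable_cos.comp (measurable_const.mul measurable_id)).sub
      measurable_const).mul (by measurability : Measurable fun ξ : ℝ => ξ ^ (-1 - α))).aestronglyMeasurable
  have habs : ∀ x : ℝ, |Real.cos x - 1| = 1 - Real.cos x := fun x => by
    rw [abs_sub_comm, abs_of_nonneg (by linarith [Real.cos_le_one x])]
  rw [← Ioc_union_Ioi_eq_Ioi (zero_le_one : (0:ℝ) ≤ 1)]
  apply IntegrableOn.union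
  · have hint : IntegrableOn (fun ξ : ℝ => k ^ 2 / 2 * ξ ^ (1 - α)) (Ioc 0 1) := by
      apply Integrable.const_mul
      exact (intervalIntegral.intervalIntegrable_rpow' (by linarith)).1
    refine Integrable.mono' hint (hmeas _) ?_
    filter_upwards [ae_restrict_mem measurableSet_Ioc] with ξ hξ
    obtain ⟨hξ0, _⟩ := hξ
    have h1 : 1 - Real.cos (k * ξ) ≤ (k * ξ) ^ 2 / 2 := by
      have := Real.one_sub_sq_div_two_le_cos (x := k * ξ); linarith
    rw [norm_mul, Real.norm_eq_abs, Real.norm_eq_abs, habs,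
      abs_of_nonneg (Real.rpow_nonneg hξ0.le _)]
    calc (1 - Real.cos (k * ξ)) * ξ ^ (-1 - α)
        ≤ (k * ξ) ^ 2 / 2 * ξ ^ (-1 - α) := by
          apply mul_le_mul_of_nonneg_right h1 (Real.rpow_nonneg hξ0.le _)
      _ = k ^ 2 / 2 * (ξ ^ (2:ℝ) * ξ ^ (-1 - α)) := by
          rw [Real.rpow_two]; ring
      _ = k ^ 2 / 2 * ξ ^ (1 - α) := by
          rw [← Real.rpow_add hξ0]; congr 1; ring_nf
  · have hint : IntegrableOn (fun ξ : ℝ => 2 * ξ ^ (-1 - α)) (Ioi 1) := by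
      apply Integrable.const_mul
      exact integrableOn_Ioi_rpow_of_lt (by linarith) zero_lt_one
    refine Integrable.mono' hint (hmeas _) ?_
    filter_upwards [ae_restrict_mem measurableSet_Ioi] with ξ hξ
    have hξ0 : (0:ℝ) < ξ := lt_trans zero_lt_one hξ
    rw [norm_mul, Real.norm_eq_abs, Real.norm_eq_abs, habs,
      abs_of_nonneg (Real.rpow_nonneg hξ0.le _)]
    have h2 : 1 - Real.cos (k * ξ) ≤ 2 := by linarith [Real.neg_one_le_cos (k * ξ)]
    exact mul_le_mul_of_nonneg_right h2 (Real.rpow_nonneg hξ0.le _)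


lemma laplace_one_sub_cos {s : ℝ} (hs : 0 < s) :
    ∫ t in Ioi (0:ℝ), Real.exp (-(s * t)) * (1 - Real.cos t) = 1 / (s * (1 + s ^ 2)) := by
  have h1s : (1:ℝ) + s ^ 2 ≠ 0 := by positivity
  set F : ℝ → ℝ := fun t =>
    -Real.exp (-(s * t)) / s - Real.exp (-(s * t)) * (Real.sin t - s * Real.cos t) / (1 + s ^ 2)
    with hF
  have hexp : ∀ t : ℝ, HasDerivAt (fun t => Real.exp (-(s * t))) (Real.exp (-(s * t)) * (-s)) t := by
    intro t
    have := (((hasDerivAt_id t).const_mul s).neg).exp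
    simpa using this
  have hderiv : ∀ t : ℝ, HasDerivAt F (Real.exp (-(s * t)) * (1 - Real.cos t)) t := by
    intro t
    have h1 : HasDerivAt (fun t => -Real.exp (-(s * t)) / s) (Real.exp (-(s * t))) t := by
      have := ((hexp t).neg).div_const s
      refine this.congr_deriv ?_
      field_simp
    have h2 : HasDerivAt (fun t => Real.exp (-(s * t)) * (Real.sin t - s * Real.cos t) / (1 + s ^ 2))
        (Real.exp (-(s * t)) * Real.cos t) t := by
      have hsin : HasDerivAt (fun t => Real.sin t - s * Real.cos t)
          (Real.cos t + s * Real.sin t) t := by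
        have := (Real.hasDerivAt_sin t).sub ((Real.hasDerivAt_cos t).const_mul s)
        refine this.congr_deriv ?_; ring
      have := ((hexp t).mul hsin).div_const (1 + s ^ 2)
      refine this.congr_deriv ?_
      field_simp
      ring
    have := h1.sub h2
    refine this.congr_deriv ?_
    ring
  have hint : IntegrableOn (fun t : ℝ => Real.exp (-(s * t)) * (1 - Real.cos t)) (Ioi 0) := by
    have hb : IntegrableOn (fun t : ℝ => Real.exp (-s * t) * 2) (Ioi 0) :=
      (exp_neg_integrableOn_Ioi 0 hs).mul_const 2
    refine Integrable.mono' hb ?_ ?_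
    · exact ((Real.measurable_exp.comp (measurable_const.mul measurable_id).neg).mul
        (measurable_const.sub Real.measurable_cos)).aestronglyMeasurable
    · filter_upwards with t
      rw [norm_mul, Real.norm_eq_abs, Real.norm_eq_abs, abs_of_pos (Real.exp_pos _), neg_mul]
      have : |1 - Real.cos t| ≤ 2 := by
        rw [abs_le]; constructor <;> nlinarith [Real.cos_le_one t, Real.neg_one_le_cos t]
      exact mul_le_mul_of_nonneg_left this (Real.exp_pos _).le
  have htend : Tendsto F atTop (nhds 0) := by
    have he : Tendsto (fun t : ℝ => Real.exp (-(s * t))) atTop (nhds 0) := by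
      have : Tendsto (fun t : ℝ => -(s * t)) atTop atBot := by
        apply tendsto_neg_atTop_atBot.comp
        exact (tendsto_id.const_mul_atTop hs)
      exact Real.tendsto_exp_atBot.comp this
    apply squeeze_zero_norm (a := fun t : ℝ => Real.exp (-(s * t)) * (1 / s + (1 + s) / (1 + s ^ 2)))
      (f := F)
    · intro t
      rw [hF]
      have h0 : (0:ℝ) < Real.exp (-(s * t)) := Real.exp_pos _
      have hb : |Real.sin t - s * Real.cos t| ≤ 1 + s := by
        calc |Real.sin t - s * Real.cos t| ≤ |Real.sin t| + |s * Real.cos t| := abs_sub _ _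
          _ ≤ 1 + s := by
            have := Real.abs_sin_le_one t
            have := Real.abs_cos_le_one t
            rw [abs_mul, abs_of_pos hs]
            nlinarith
      calc ‖-Real.exp (-(s * t)) / s -
              Real.exp (-(s * t)) * (Real.sin t - s * Real.cos t) / (1 + s ^ 2)‖
          ≤ ‖-Real.exp (-(s * t)) / s‖ +
              ‖Real.exp (-(s * t)) * (Real.sin t - s * Real.cos t) / (1 + s ^ 2)‖ := norm_sub_le _ _
        _ ≤ Real.exp (-(s * t)) * (1 / s) + Real.exp (-(s * t)) * ((1 + s) / (1 + s ^ 2)) := by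
            apply add_le_add
            · rw [norm_div, norm_neg, Real.norm_eq_abs, Real.norm_eq_abs,
                abs_of_pos h0, abs_of_pos hs]
              rw [mul_one_div]
            · rw [norm_div, norm_mul, Real.norm_eq_abs, Real.norm_eq_abs, Real.norm_eq_abs,
                abs_of_pos h0, abs_of_pos (by positivity : (0:ℝ) < 1 + s ^ 2)]
              rw [div_le_iff₀ (by positivity : (0:ℝ) < 1 + s ^ 2), mul_assoc,
                div_mul_cancel₀ _ h1s]
              exact mul_le_mul_of_nonneg_left hb h0.le
        _ = Real.exp (-(s * t)) * (1 / s + (1 + s) / (1 + s ^ 2)) := by ring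
    · have := he.mul_const (1 / s + (1 + s) / (1 + s ^ 2))
      simpa using this
  have := integral_Ioi_of_hasDerivAt_of_tendsto' (f := F)
    (fun x _ => hderiv x) hint htend
  rw [this, hF]
  simp only [mul_zero, neg_zero, Real.exp_zero, Real.sin_zero, Real.cos_zero]
  field_simp
  ring


lemma integral_exp_neg_mul_Ioi' {b : ℝ} (hb : 0 < b) :
    ∫ u in Ioi (0:ℝ), Real.exp (-(b * u)) = 1 / b := by
  have := integral_rpow_mul_exp_neg_mul_Ioi (a := 1) zero_lt_one hb
  simpa [Real.Gamma_one] using this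

lemma Kint_integrable (α : ℝ) (hα : 0 < α) (hα2 : α < 2) :
    IntegrableOn (fun s : ℝ => s ^ (α - 1) * (1 + s ^ 2)⁻¹) (Ioi 0) := by
  have hmeas : ∀ S : Set ℝ, AEStronglyMeasurable
      (fun s : ℝ => s ^ (α - 1) * (1 + s ^ 2)⁻¹) (volume.restrict S) := fun S => by
    apply Measurable.aestronglyMeasurable; measurability
  rw [← Ioc_union_Ioi_eq_Ioi (zero_le_one : (0:ℝ) ≤ 1)]
  apply IntegrableOn.union
  · refine Integrable.mono' ((intervalIntegral.intervalIntegrable_rpow'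
      (show (-1:ℝ) < α - 1 by linarith)).1) (hmeas _) ?_
    filter_upwards [ae_restrict_mem measurableSet_Ioc] with s hs
    rw [norm_mul, Real.norm_eq_abs, Real.norm_eq_abs,
      abs_of_nonneg (Real.rpow_nonneg hs.1.le _),
      abs_of_nonneg (by positivity : (0:ℝ) ≤ (1 + s ^ 2)⁻¹)]
    nth_rewrite 2 [← mul_one (s ^ (α - 1))]
    apply mul_le_mul_of_nonneg_left _ (Real.rpow_nonneg hs.1.le _)
    rw [inv_le_one_iff₀]; right; nlinarith [sq_nonneg s]
  · refine Integrable.mono' (integrableOn_Ioi_rpow_of_lt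
      (show α - 3 < -1 by linarith) zero_lt_one) (hmeas _) ?_
    filter_upwards [ae_restrict_mem measurableSet_Ioi] with s hs
    have hs0 : (0:ℝ) < s := lt_trans zero_lt_one hs
    rw [norm_mul, Real.norm_eq_abs, Real.norm_eq_abs,
      abs_of_nonneg (Real.rpow_nonneg hs0.le _),
      abs_of_nonneg (by positivity : (0:ℝ) ≤ (1 + s ^ 2)⁻¹)]
    have h1 : (1 + s ^ 2)⁻¹ ≤ s ^ (-2 : ℝ) := by
      rw [Real.rpow_neg hs0.le, Real.rpow_two]
      apply inv_anti₀ (by positivity)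
      nlinarith
    calc s ^ (α - 1) * (1 + s ^ 2)⁻¹ ≤ s ^ (α - 1) * s ^ (-2 : ℝ) :=
          mul_le_mul_of_nonneg_left h1 (Real.rpow_nonneg hs0.le _)
      _ = s ^ (α - 3) := by rw [← Real.rpow_add hs0]; congr 1; ring

lemma K_value (α : ℝ) (hα : 0 < α) (hα2 : α < 2) :
    ∫ s in Ioi (0:ℝ), s ^ (α - 1) * (1 + s ^ 2)⁻¹ = π / (2 * Real.sin (α * π / 2)) := by
  set f : ℝ → ℝ → ℝ := fun s u => s ^ (α - 1) * Real.exp (-(u * (1 + s ^ 2))) with hf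
  have hf_nonneg : ∀ s u : ℝ, 0 ≤ s → 0 ≤ f s u := fun s u hs => by
    apply mul_nonneg (Real.rpow_nonneg hs _) (Real.exp_pos _).le
  have hmeas : AEStronglyMeasurable (Function.uncurry f)
      ((volume.restrict (Ioi (0:ℝ))).prod (volume.restrict (Ioi (0:ℝ)))) := by
    apply Measurable.aestronglyMeasurable
    have h1 : Measurable fun p : ℝ × ℝ => p.1 ^ (α - 1) * Real.exp (-(p.2 * (1 + p.1 ^ 2))) := by
      measurability
    exact h1
  -- inner integral over u, for s > 0
  have hinner_u : ∀ s : ℝ, 0 < s →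
      ∫ u in Ioi (0:ℝ), f s u = s ^ (α - 1) * (1 + s ^ 2)⁻¹ := by
    intro s _
    rw [hf]
    simp only []
    rw [integral_const_mul]
    have hb : (0:ℝ) < 1 + s ^ 2 := by positivity
    have : ∫ u in Ioi (0:ℝ), Real.exp (-(u * (1 + s ^ 2)))
        = ∫ u in Ioi (0:ℝ), Real.exp (-((1 + s ^ 2) * u)) := by
      congr 1; ext u; rw [mul_comm]
    rw [this, integral_exp_neg_mul_Ioi' hb, one_div]
  -- integrability in u for each s > 0
  have hint_u : ∀ s : ℝ, 0 < s →
      Integrable (fun u => f s u) (volume.restrict (Ioi (0:ℝ))) := by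
    intro s _
    have hb : (0:ℝ) < 1 + s ^ 2 := by positivity
    have h1 := (exp_neg_integrableOn_Ioi 0 hb).const_mul (s ^ (α - 1))
    refine h1.congr ?_
    filter_upwards with u
    rw [hf]; simp only [neg_mul]; rw [mul_comm u]
  -- product integrability
  have hprod : Integrable (Function.uncurry f)
      ((volume.restrict (Ioi (0:ℝ))).prod (volume.restrict (Ioi (0:ℝ)))) := by
    rw [MeasureTheory.integrable_prod_iff hmeas]
    constructor
    · filter_upwards [ae_restrict_mem measurableSet_Ioi] with s hs
      exact hint_u s hs
    · apply Integrable.congr (Kint_integrable α hα hα2)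
      filter_upwards [ae_restrict_mem measurableSet_Ioi] with s hs
      rw [← hinner_u s hs]
      rw [← integral_congr_ae]
      filter_upwards [ae_restrict_mem measurableSet_Ioi] with u _
      rw [Function.uncurry_apply_pair, Real.norm_eq_abs, abs_of_nonneg (hf_nonneg s u hs.le)]
  -- the swap
  have hswap := MeasureTheory.integral_integral_swap hprod
  -- LHS of swap equals our integral
  have hL : (∫ s in Ioi (0:ℝ), ∫ u in Ioi (0:ℝ), f s u)
      = ∫ s in Ioi (0:ℝ), s ^ (α - 1) * (1 + s ^ 2)⁻¹ := by
    apply integral_congr_ae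
    filter_upwards [ae_restrict_mem measurableSet_Ioi] with s hs
    exact hinner_u s hs
  -- RHS inner integral over s, for u > 0
  have hinner_s : ∀ u : ℝ, 0 < u →
      ∫ s in Ioi (0:ℝ), f s u
        = Real.exp (-u) * (u ^ (-(α / 2)) * (1 / 2) * Real.Gamma (α / 2)) := by
    intro u hu
    have key := integral_rpow_mul_exp_neg_mul_rpow (p := 2) (q := α - 1)
      (by norm_num) (by linarith : (-1:ℝ) < α - 1) hu
    have heq : ∀ s ∈ Ioi (0:ℝ), f s u
        = Real.exp (-u) * (s ^ (α - 1) * Real.exp (-u * s ^ (2:ℝ))) := by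
      intro s hs
      rw [hf]
      simp only []
      rw [Real.rpow_two,
        show Real.exp (-(u * (1 + s ^ 2))) = Real.exp (-u) * Real.exp (-u * s ^ 2) by
          rw [← Real.exp_add]; congr 1; ring]
      ring
    rw [setIntegral_congr_fun measurableSet_Ioi heq, integral_const_mul, key]
    congr 2
    · congr 1; ring
    · ring
  rw [← hL, hswap]
  have hR : (∫ u in Ioi (0:ℝ), ∫ s in Ioi (0:ℝ), f s u)
      = ∫ u in Ioi (0:ℝ), Real.Gamma (α / 2) * (1 / 2) *
          (u ^ ((1 - α / 2) - 1) * Real.exp (-(1 * u))) := by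
    apply integral_congr_ae
    filter_upwards [ae_restrict_mem measurableSet_Ioi] with u hu
    rw [hinner_s u hu]
    rw [show ((1:ℝ) - α / 2) - 1 = -(α / 2) by ring, one_mul]
    ring
  rw [hR, integral_const_mul, integral_rpow_mul_exp_neg_mul_Ioi (by linarith) zero_lt_one]
  have hrefl := Real.Gamma_mul_Gamma_one_sub (α / 2)
  have hsin : Real.sin (π * (α / 2)) = Real.sin (α * π / 2) := by congr 1; ring
  rw [hsin] at hrefl
  have hone : ((1:ℝ)/1) ^ (1 - α / 2) = 1 := by norm_num
  rw [hone, one_mul]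
  linear_combination (1/2) * hrefl

lemma I_value (α : ℝ) (hα : 0 < α) (hα2 : α < 2) :
    ∫ t in Ioi (0:ℝ), (Real.cos t - 1) * t ^ (-1 - α) =
      -(π / (2 * Real.Gamma (1 + α) * Real.sin (α * π / 2))) := by
  set H : ℝ → ℝ → ℝ := fun t s => (1 - Real.cos t) * (s ^ α * Real.exp (-(t * s))) with hH
  have hH_nonneg : ∀ t s : ℝ, 0 ≤ s → 0 ≤ H t s := fun t s hs => by
    apply mul_nonneg (by linarith [Real.cos_le_one t])
      (mul_nonneg (Real.rpow_nonneg hs _) (Real.exp_pos _).le)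
  have hmeas : AEStronglyMeasurable (Function.uncurry H)
      ((volume.restrict (Ioi (0:ℝ))).prod (volume.restrict (Ioi (0:ℝ)))) := by
    apply Measurable.aestronglyMeasurable
    have h1 : Measurable fun p : ℝ × ℝ =>
        (1 - Real.cos p.1) * (p.2 ^ α * Real.exp (-(p.1 * p.2))) := by measurability
    exact h1
  have hGpos : 0 < Real.Gamma (1 + α) := Real.Gamma_pos_of_pos (by linarith)
  -- inner integral over s for t > 0
  have hinner_s : ∀ t : ℝ, 0 < t →
      ∫ s in Ioi (0:ℝ), H t s = (1 - Real.cos t) * (t ^ (-1 - α) * Real.Gamma (1 + α)) := by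
    intro t ht
    have hpow : (1 / t : ℝ) ^ (1 + α) = t ^ (-1 - α) := by
      rw [one_div, ← Real.rpow_neg_one t, ← Real.rpow_mul ht.le]
      congr 1
      ring
    rw [hH]
    simp only []
    rw [integral_const_mul]
    have key := integral_rpow_mul_exp_neg_mul_Ioi (a := 1 + α) (by linarith : (0:ℝ) < 1 + α) ht
    have heq : ∀ s ∈ Ioi (0:ℝ), s ^ α * Real.exp (-(t * s))
        = s ^ (1 + α - 1) * Real.exp (-(t * s)) := by
      intro s _
      congr 2
      ring
    rw [setIntegral_congr_fun measurableSet_Ioi heq, key, hpow]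
  -- integrability in s for each t > 0
  have hint_s : ∀ t : ℝ, 0 < t →
      Integrable (fun s => H t s) (volume.restrict (Ioi (0:ℝ))) := by
    intro t ht
    have h1 : IntegrableOn (fun s : ℝ => s ^ α * Real.exp (-t * s ^ (1:ℝ))) (Ioi 0) :=
      integrableOn_rpow_mul_exp_neg_mul_rpow (by linarith : (-1:ℝ) < α) zero_lt_one ht
    have h2 : IntegrableOn (fun s : ℝ => s ^ α * Real.exp (-(t * s))) (Ioi 0) := by
      refine h1.congr ?_
      filter_upwards with s
      rw [Real.rpow_one, neg_mul]
    exact h2.const_mul _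
  -- product integrability
  have hprod : Integrable (Function.uncurry H)
      ((volume.restrict (Ioi (0:ℝ))).prod (volume.restrict (Ioi (0:ℝ)))) := by
    rw [MeasureTheory.integrable_prod_iff hmeas]
    constructor
    · filter_upwards [ae_restrict_mem measurableSet_Ioi] with t ht
      exact hint_s t ht
    · have hbase : Integrable (fun t : ℝ => Real.Gamma (1 + α) *
          (-((Real.cos t - 1) * t ^ (-1 - α)))) (volume.restrict (Ioi 0)) := by
        apply Integrable.const_mul
        have := aux_integrable α hα hα2 1
        simp only [one_mul] at this
        exact this.neg
      apply Integrable.congr hbase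
      filter_upwards [ae_restrict_mem measurableSet_Ioi] with t ht
      have : (∫ s in Ioi (0:ℝ), ‖Function.uncurry H (t, s)‖)
          = ∫ s in Ioi (0:ℝ), H t s := by
        apply integral_congr_ae
        filter_upwards [ae_restrict_mem measurableSet_Ioi] with s hs
        rw [Function.uncurry_apply_pair, Real.norm_eq_abs, abs_of_nonneg (hH_nonneg t s hs.le)]
      rw [this, hinner_s t ht]
      ring
  -- the swap
  have hswap := MeasureTheory.integral_integral_swap hprod
  -- LHS of swap
  have hL : (∫ t in Ioi (0:ℝ), ∫ s in Ioi (0:ℝ), H t s)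
      = Real.Gamma (1 + α) * -(∫ t in Ioi (0:ℝ), (Real.cos t - 1) * t ^ (-1 - α)) := by
    rw [← integral_neg, ← integral_const_mul]
    apply integral_congr_ae
    filter_upwards [ae_restrict_mem measurableSet_Ioi] with t ht
    rw [hinner_s t ht]
    ring
  -- RHS of swap
  have hR : (∫ s in Ioi (0:ℝ), ∫ t in Ioi (0:ℝ), H t s)
      = π / (2 * Real.sin (α * π / 2)) := by
    rw [← K_value α hα hα2]
    apply integral_congr_ae
    filter_upwards [ae_restrict_mem measurableSet_Ioi] with s hs
    have h1 : ∀ t : ℝ, H t s = s ^ α * (Real.exp (-(s * t)) * (1 - Real.cos t)) := by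
      intro t
      rw [hH]
      simp only []
      rw [mul_comm t s]
      ring
    simp_rw [h1]
    rw [integral_const_mul, laplace_one_sub_cos hs]
    have hs0 : (0:ℝ) < s := hs
    rw [show s ^ (α - 1) = s ^ α * s⁻¹ by
      rw [← Real.rpow_neg_one s, ← Real.rpow_add hs0, ← sub_eq_add_neg]]
    have h2 : (0:ℝ) < 1 + s ^ 2 := by positivity
    field_simp
  rw [hL, hR] at hswap
  have hGne : Real.Gamma (1 + α) ≠ 0 := ne_of_gt hGpos
  have hsinpos : 0 < Real.sin (α * π / 2) := by
    apply Real.sin_pos_of_pos_of_lt_pi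
    · positivity
    · nlinarith [Real.pi_pos]
  field_simp at hswap ⊢
  linarith [hswap]

theorem cos_power_integral (α : ℝ) (hα : 0 < α) (hα2 : α < 2) (k : ℝ) :
    IntegrableOn (fun ξ : ℝ => (Real.cos (k * ξ) - 1) * ξ ^ (-1 - α)) (Ioi 0) ∧
      ∫ ξ in Ioi (0:ℝ), (Real.cos (k * ξ) - 1) * ξ ^ (-1 - α) =
        -|k| ^ α * (π / (2 * Real.Gamma (1 + α) * Real.sin (α * π / 2))) := by
  refine ⟨aux_integrable α hα hα2 k, ?_⟩
  rcases eq_or_ne k 0 with rfl | hk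
  · simp only [zero_mul, Real.cos_zero, sub_self, integral_zero]
    rw [abs_zero, Real.zero_rpow (ne_of_gt hα)]
    ring
  · have hk0 : 0 < |k| := abs_pos.mpr hk
    have hcos : ∀ ξ : ℝ, Real.cos (k * ξ) = Real.cos (|k| * ξ) := by
      intro ξ
      rcases abs_choice k with h | h
      · rw [h]
      · rw [h, neg_mul, Real.cos_neg]
    simp_rw [hcos]
    have hcc : |k| ^ (1 + α) * |k| ^ (-1 - α) = 1 := by
      rw [← Real.rpow_add hk0, show (1 + α) + (-1 - α) = (0:ℝ) by ring, Real.rpow_zero]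
    have hscale : ∀ ξ ∈ Ioi (0:ℝ), (Real.cos (|k| * ξ) - 1) * ξ ^ (-1 - α)
        = |k| ^ (1 + α) * ((Real.cos (|k| * ξ) - 1) * (|k| * ξ) ^ (-1 - α)) := by
      intro ξ hξ
      rw [Real.mul_rpow hk0.le (le_of_lt hξ)]
      linear_combination (-((Real.cos (|k| * ξ) - 1) * ξ ^ (-1 - α))) * hcc
    rw [setIntegral_congr_fun measurableSet_Ioi hscale, integral_const_mul]
    have hcomp := integral_comp_mul_left_Ioi
      (fun t : ℝ => (Real.cos t - 1) * t ^ (-1 - α)) 0 hk0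
    simp only [mul_zero] at hcomp
    rw [hcomp, smul_eq_mul, I_value α hα hα2]
    have hpow : |k| ^ (1 + α) * |k|⁻¹ = |k| ^ α := by
      rw [← Real.rpow_neg_one |k|, ← Real.rpow_add hk0,
        show (1 + α) + (-1) = α by ring]
    linear_combination (-(π / (2 * Real.Gamma (1 + α) * Real.sin (α * π / 2)))) * hpow
end

section
/- Fix r_v = 1 and T > 0. Define the nondestructive efficiency η_n(α, β; λ) = 1/(N_n · ⟨LT⟩) with N_n = λ^{α/2} and ⟨LT⟩(α,β) = (αβT/((1-α)(1-β)))(λ^{1-α} - 1) + T λ^{1-α}. Then for fixed 0 < β < 1, the function f(α) = λ η_n(α,β;λ) satisfies: for every ε > 0 there exists Λ such that for all λ > Λ, the maximizer α* of f on (0,1) satisfies |α* - 1| < ε. -/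
open Real Set

-- Upper bound on the efficiency: f α ≤ lam^(α/2)/T on (0,1)
lemma eff_upper_bound (T β lam α : ℝ) (hT : 0 < T) (hβ : 0 < β) (hβ1 : β < 1)
    (hlam1 : 1 < lam) (hα : α ∈ Ioo (0:ℝ) 1) :
    lam * (1 / (lam ^ (α / 2) *
      ((α * β * T / ((1 - α) * (1 - β))) * (lam ^ (1 - α) - 1) + T * lam ^ (1 - α))))
      ≤ lam ^ (α / 2) / T := by
  have hlam0 : (0:ℝ) < lam := by linarith
  obtain ⟨hα0, hα1⟩ := hα
  have h1α : (0:ℝ) < 1 - α := by linarith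
  have h1β : (0:ℝ) < 1 - β := by linarith
  have hA : (0:ℝ) < lam ^ (α / 2) := Real.rpow_pos_of_pos hlam0 _
  have hB : (0:ℝ) < lam ^ (1 - α) := Real.rpow_pos_of_pos hlam0 _
  have hB1 : (1:ℝ) < lam ^ (1 - α) :=
    Real.one_lt_rpow_iff_of_pos hlam0 |>.mpr (Or.inl ⟨hlam1, h1α⟩)
  have hfirst : 0 ≤ (α * β * T / ((1 - α) * (1 - β))) * (lam ^ (1 - α) - 1) := by
    apply mul_nonneg
    · positivity
    · linarith
  have hD : T * lam ^ (1 - α) ≤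
      (α * β * T / ((1 - α) * (1 - β))) * (lam ^ (1 - α) - 1) + T * lam ^ (1 - α) := by
    linarith
  have hstep : lam * (1 / (lam ^ (α / 2) *
      ((α * β * T / ((1 - α) * (1 - β))) * (lam ^ (1 - α) - 1) + T * lam ^ (1 - α))))
      ≤ lam * (1 / (lam ^ (α / 2) * (T * lam ^ (1 - α)))) := by
    apply mul_le_mul_of_nonneg_left _ (le_of_lt hlam0)
    apply one_div_le_one_div_of_le (by positivity)
    exact mul_le_mul_of_nonneg_left hD (le_of_lt hA)
  refine hstep.trans (le_of_eq ?_)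
  have hlam_eq : lam = lam ^ (α / 2) * lam ^ (α / 2) * lam ^ (1 - α) := by
    rw [← Real.rpow_add hlam0, ← Real.rpow_add hlam0,
      show α / 2 + α / 2 + (1 - α) = 1 by ring, Real.rpow_one]
  nth_rewrite 1 [hlam_eq]
  rw [mul_one_div, div_eq_div_iff (by positivity) (ne_of_gt hT)]
  ring

set_option maxHeartbeats 1000000 in
theorem nondestructive_optimal_alpha (T β : ℝ) (hT : 0 < T) (hβ : 0 < β) (hβ1 : β < 1) :
    ∀ ε > 0, ∃ Λ : ℝ, ∀ lam > Λ, lam > 1 →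
      ∀ αstar ∈ Ioo (0:ℝ) 1,
        IsMaxOn (fun α : ℝ => lam *
            (1 / (lam ^ (α / 2) *
              ((α * β * T / ((1 - α) * (1 - β))) * (lam ^ (1 - α) - 1)
                + T * lam ^ (1 - α)))))
          (Ioo (0:ℝ) 1) αstar →
        |αstar - 1| < ε := by
  intro ε hε
  by_cases hε1 : ε < 1
  swap
  · refine ⟨0, fun lam _ _ αstar hα _ => ?_⟩
    rw [abs_sub_lt_iff]
    constructor
    · linarith [hα.2]
    · linarith [hα.1]
  have h1β : (0:ℝ) < 1 - β := by linarith
  set C : ℝ := 2 * β * T / (ε * (1 - β)) + T with hCdef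
  have hC : 0 < C := by positivity
  have hCT : 0 < C / T := by positivity
  refine ⟨max 1 ((C / T) ^ ((4:ℝ) / ε)), fun lam hlam hlam1 αstar hα hmax => ?_⟩
  have hlam0 : (0:ℝ) < lam := by linarith
  have hlamΛ : (C / T) ^ ((4:ℝ) / ε) < lam := lt_of_le_of_lt (le_max_right _ _) hlam
  -- lam ^ (ε/4) > C / T
  have hpow : C / T < lam ^ (ε / 4) := by
    have h := Real.rpow_lt_rpow (Real.rpow_nonneg (le_of_lt hCT) _) hlamΛ
      (by positivity : (0:ℝ) < ε / 4)
    rwa [← Real.rpow_mul (le_of_lt hCT),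
      show (4:ℝ) / ε * (ε / 4) = 1 by field_simp, Real.rpow_one] at h
  by_contra hcon
  have hcon' : ε ≤ 1 - αstar := by
    have := not_lt.mp hcon
    rw [abs_of_nonpos (by linarith [hα.2] : αstar - 1 ≤ 0)] at this
    linarith
  -- test point α₀ = 1 - ε/2
  have hα₀mem : (1 - ε / 2) ∈ Ioo (0:ℝ) 1 := ⟨by linarith, by linarith⟩
  have hkey := hmax hα₀mem
  simp only [Set.mem_setOf_eq] at hkey
  rw [show (1:ℝ) - (1 - ε / 2) = ε / 2 by ring] at hkey
  -- upper bound at αstar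
  have hub := eff_upper_bound T β lam αstar hT hβ hβ1 hlam1 hα
  -- lower bound at α₀ = 1 - ε/2
  have hE : (0:ℝ) < lam ^ (ε / 2) := Real.rpow_pos_of_pos hlam0 _
  have hA₀ : (0:ℝ) < lam ^ ((1 - ε / 2) / 2) := Real.rpow_pos_of_pos hlam0 _
  have hE1 : (1:ℝ) < lam ^ (ε / 2) :=
    Real.one_lt_rpow_iff_of_pos hlam0 |>.mpr (Or.inl ⟨hlam1, by linarith⟩)
  have hc0 : 0 ≤ (1 - ε / 2) * β * T / (ε / 2 * (1 - β)) :=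
    div_nonneg (mul_nonneg (mul_nonneg (by linarith) hβ.le) hT.le) (by positivity)
  have hDub : ((1 - ε / 2) * β * T / (ε / 2 * (1 - β))) * (lam ^ (ε / 2) - 1)
      + T * lam ^ (ε / 2) ≤ C * lam ^ (ε / 2) := by
    have hc1 : (1 - ε / 2) * β * T / (ε / 2 * (1 - β)) ≤ 2 * β * T / (ε * (1 - β)) := by
      rw [div_le_div_iff₀ (by positivity) (by positivity)]
      nlinarith [mul_pos (mul_pos (mul_pos hε hε) hβ) (mul_pos hT h1β)]
    have hm : ((1 - ε / 2) * β * T / (ε / 2 * (1 - β))) * (lam ^ (ε / 2) - 1)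
        ≤ (2 * β * T / (ε * (1 - β))) * lam ^ (ε / 2) :=
      mul_le_mul hc1 (by linarith) (by linarith) (le_of_lt (by positivity))
    rw [hCdef]
    nlinarith
  have hD₀pos : 0 < ((1 - ε / 2) * β * T / (ε / 2 * (1 - β))) * (lam ^ (ε / 2) - 1)
      + T * lam ^ (ε / 2) := by nlinarith
  have hlb : lam ^ ((1:ℝ) / 2 - ε / 4) / C ≤
      lam * (1 / (lam ^ ((1 - ε / 2) / 2) *
        (((1 - ε / 2) * β * T / (ε / 2 * (1 - β))) * (lam ^ (ε / 2) - 1)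
          + T * lam ^ (ε / 2)))) := by
    have h1 : lam * (1 / (lam ^ ((1 - ε / 2) / 2) * (C * lam ^ (ε / 2)))) ≤
        lam * (1 / (lam ^ ((1 - ε / 2) / 2) *
          (((1 - ε / 2) * β * T / (ε / 2 * (1 - β))) * (lam ^ (ε / 2) - 1)
            + T * lam ^ (ε / 2)))) := by
      apply mul_le_mul_of_nonneg_left _ (le_of_lt hlam0)
      apply one_div_le_one_div_of_le (by positivity)
      exact mul_le_mul_of_nonneg_left hDub (le_of_lt hA₀)
    have heq : lam * (1 / (lam ^ ((1 - ε / 2) / 2) * (C * lam ^ (ε / 2))))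
        = lam ^ ((1:ℝ) / 2 - ε / 4) / C := by
      have hlam_eq : lam = lam ^ ((1 - ε / 2) / 2) * lam ^ (ε / 2) * lam ^ ((1:ℝ) / 2 - ε / 4) := by
        rw [← Real.rpow_add hlam0, ← Real.rpow_add hlam0,
          show (1 - ε / 2) / 2 + ε / 2 + ((1:ℝ) / 2 - ε / 4) = 1 by ring, Real.rpow_one]
      nth_rewrite 1 [hlam_eq]
      rw [mul_one_div, div_eq_div_iff (by positivity) (ne_of_gt hC)]
      ring
    exact le_trans (le_of_eq heq.symm) h1
  -- chain everything
  have hchain : lam ^ ((1:ℝ) / 2 - ε / 4) / C ≤ lam ^ (αstar / 2) / T :=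
    le_trans hlb (le_trans hkey hub)
  have hmono : lam ^ (αstar / 2) ≤ lam ^ (((1:ℝ) - ε) / 2) :=
    Real.rpow_le_rpow_left_iff hlam1 |>.mpr (by linarith)
  have hfinal : lam ^ ((1:ℝ) / 2 - ε / 4) / C ≤ lam ^ (((1:ℝ) - ε) / 2) / T :=
    le_trans hchain ((div_le_div_iff_of_pos_right hT).mpr hmono)
  have hsplit : lam ^ ((1:ℝ) / 2 - ε / 4) = lam ^ (((1:ℝ) - ε) / 2) * lam ^ (ε / 4) := by
    rw [← Real.rpow_add hlam0]
    congr 1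
    ring
  have hP : (0:ℝ) < lam ^ (((1:ℝ) - ε) / 2) := Real.rpow_pos_of_pos hlam0 _
  rw [hsplit, div_le_div_iff₀ hC hT] at hfinal
  have hE4 : (0:ℝ) < lam ^ (ε / 4) := Real.rpow_pos_of_pos hlam0 _
  have hpow' : C < T * lam ^ (ε / 4) := by
    rw [div_lt_iff₀ hT] at hpow; linarith
  nlinarith [mul_lt_mul_of_pos_left hpow' hP]
end
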